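/- Let 0 < q₁ < p₁ ≤ 1, 0 < q₂ < p₂ ≤ 1, let n, m ≥ 1, and let f : [0,1]² → ℝ be continuous. Then for every (x,y) ∈ [0,1]², |B_{n,m}(f;x,y) - f(x,y)| ≤ 2 ω(f, δ_{n,m}(x,y)), where δ_{n,m}(x,y) = √( (p₁^{n-1}/[n]_{p₁,q₁})(x - x²) + (p₂^{m-1}/[m]_{p₂,q₂})(y - y²) ). -/

import Mathlib

open Finset Set Filter Topology

/-- The (p,q)-integer `[n]_{p,q} = ∑_{i=0}^{n-1} p^(n-1-i) q^i`. -/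
noncomputable def pqInt (p q : ℝ) (n : ℕ) : ℝ :=
  ∑ i ∈ Finset.range n, p ^ (n - 1 - i) * q ^ i

/-- The (p,q)-factorial `[n]_{p,q}! = ∏_{j=1}^n [j]_{p,q}`. -/
noncomputable def pqFactorial (p q : ℝ) (n : ℕ) : ℝ :=
  ∏ j ∈ Finset.range n, pqInt p q (j + 1)

/-- The (p,q)-binomial coefficient. -/
noncomputable def pqChoose (p q : ℝ) (n k : ℕ) : ℝ :=
  pqFactorial p q n / (pqFactorial p q k * pqFactorial p q (n - k))

/-- The node `p^(n-k) [k]_{p,q} / [n]_{p,q}` of the (p,q)-Bernstein operator. -/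
noncomputable def pqNode (p q : ℝ) (n k : ℕ) : ℝ :=
  p ^ (n - k) * pqInt p q k / pqInt p q n

/-- The basis function
`p^((k(k-1)-n(n-1))/2) C(n,k)_{p,q} x^k ∏_{s=0}^{n-k-1} (p^s - q^s x)`,
where `p^((k(k-1)-n(n-1))/2)` is written as `p^(k(k-1)/2) / p^(n(n-1)/2)`. -/
noncomputable def pqBasis (p q : ℝ) (n k : ℕ) (x : ℝ) : ℝ :=
  (p ^ (k.choose 2) / p ^ (n.choose 2)) * pqChoose p q n k * x ^ k *
    ∏ s ∈ Finset.range (n - k), (p ^ s - q ^ s * x)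

/-- The (p,q)-Bernstein operator `B_{n,p,q}(f;x)`. -/
noncomputable def pqBernstein (p q : ℝ) (n : ℕ) (f : ℝ → ℝ) (x : ℝ) : ℝ :=
  ∑ k ∈ Finset.range (n + 1), pqBasis p q n k x * f (pqNode p q n k)

/-- The bivariate (p,q)-Bernstein operator
`B_{n,m}^{(p₁,q₁),(p₂,q₂)}(f;x,y)`. -/
noncomputable def pqBernstein2 (p₁ q₁ p₂ q₂ : ℝ) (n m : ℕ)
    (f : ℝ → ℝ → ℝ) (x y : ℝ) : ℝ :=
  ∑ k ∈ Finset.range (n + 1), ∑ j ∈ Finset.range (m + 1),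
    pqBasis p₁ q₁ n k x * pqBasis p₂ q₂ m j y *
      f (pqNode p₁ q₁ n k) (pqNode p₂ q₂ m j)

/-- The complete modulus of continuity of a bivariate function on `[0,1]²`. -/
noncomputable def completeModulus (f : ℝ → ℝ → ℝ) (δ : ℝ) : ℝ :=
  sSup {d : ℝ | ∃ t ∈ Set.Icc (0 : ℝ) 1, ∃ s ∈ Set.Icc (0 : ℝ) 1,
    ∃ x ∈ Set.Icc (0 : ℝ) 1, ∃ y ∈ Set.Icc (0 : ℝ) 1,
    Real.sqrt ((t - x) ^ 2 + (s - y) ^ 2) ≤ δ ∧ d = |f t s - f x y|}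

/-!
Substituting `t = q / p` turns every `(p,q)`-basis function and node into the corresponding
`q`-Bernstein one (`p = 1`) and `p ^ (n - 1) / [n]_{p,q}` into `1 / [n]_t`. For `0 < t ≤ 1` the
`t`-Bernstein basis is a nonnegative partition of unity on `[0,1]` with nodes in `[0,1]` and
second central moment `(x - x²) / [n]_t`, so the tensor-product weights have second moment `δ²`
about `(x, y)`. Cutting a segment of length `d` into `⌈d² / δ²⌉` pieces gives
`|f a - f b| ≤ (1 + d² / δ²) ω(f, δ)`, and averaging this against the weights gives
`(1 + δ² / δ²) ω(f, δ) = 2 ω(f, δ)`.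
-/

lemma Finset.sum_range_succ_succ_eq_of_pascal {M : Type*} [AddCommMonoid M] {g c d : ℕ → M}
    {n : ℕ} (h₀ : g 0 = c 0) (hsucc : ∀ k < n, g (k + 1) = c (k + 1) + d k)
    (hlast : g (n + 1) = d n) :
    ∑ k ∈ range (n + 2), g k = ∑ k ∈ range (n + 1), (c k + d k) := by
  rw [sum_add_distrib, sum_range_succ', sum_range_succ, sum_range_succ' c, sum_range_succ d,
    sum_congr rfl fun k hk => hsucc k (mem_range.mp hk), sum_add_distrib, h₀, hlast]
  abel

lemma Nat.add_choose_two (a b : ℕ) : (a + b).choose 2 = a.choose 2 + b.choose 2 + a * b := by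
  apply Nat.cast_injective (R := ℚ)
  push_cast [Nat.cast_choose_two]
  ring

lemma Finset.sum_range_id_eq_choose_two (n : ℕ) : ∑ i ∈ range n, i = n.choose 2 := by
  rw [sum_range_id, Nat.choose_two_right]

lemma Finset.sum_product_mul_mul_add {ι κ R : Type*} [CommSemiring R] (s : Finset ι)
    (t : Finset κ) {u g : ι → R} {v h : κ → R} (hu : ∑ i ∈ s, u i = 1) (hv : ∑ j ∈ t, v j = 1) :
    ∑ z ∈ s ×ˢ t, u z.1 * v z.2 * (g z.1 + h z.2) =
      ∑ i ∈ s, u i * g i + ∑ j ∈ t, v j * h j := by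
  simp only [sum_product, mul_add, sum_add_distrib]
  simp only [mul_right_comm (u _) (v _) (g _), mul_assoc (u _) (v _) (h _), ← sum_mul, ← mul_sum,
    hu, hv, one_mul, mul_one]

lemma pqInt_zero (p q : ℝ) : pqInt p q 0 = 0 := sum_range_zero _

lemma pqInt_one_eq_sum_pow (q : ℝ) (n : ℕ) : pqInt 1 q n = ∑ i ∈ range n, q ^ i := by
  simp [pqInt]

lemma pqInt_one_succ (q : ℝ) (n : ℕ) : pqInt 1 q (n + 1) = pqInt 1 q n + q ^ n := by
  simp [pqInt_one_eq_sum_pow, sum_range_succ]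

lemma pqInt_one_add (q : ℝ) (a b : ℕ) :
    pqInt 1 q (a + b) = pqInt 1 q a + q ^ a * pqInt 1 q b := by
  simp [pqInt_one_eq_sum_pow, sum_range_add, mul_sum, pow_add]

lemma one_sub_mul_pqInt_one (q : ℝ) (n : ℕ) : (1 - q) * pqInt 1 q n = 1 - q ^ n := by
  rw [pqInt_one_eq_sum_pow, mul_neg_geom_sum]

lemma pqInt_one_nonneg {q : ℝ} (hq : 0 ≤ q) (n : ℕ) : 0 ≤ pqInt 1 q n := by
  rw [pqInt_one_eq_sum_pow]
  positivity

lemma pqInt_one_pos {q : ℝ} (hq : 0 < q) {n : ℕ} (hn : 0 < n) : 0 < pqInt 1 q n := by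
  rw [pqInt_one_eq_sum_pow]
  exact sum_pos (fun i _ => pow_pos hq i) (nonempty_range_iff.mpr hn.ne')

lemma pqInt_one_mono {q : ℝ} (hq : 0 ≤ q) {k n : ℕ} (hkn : k ≤ n) :
    pqInt 1 q k ≤ pqInt 1 q n := by
  simp only [pqInt_one_eq_sum_pow]
  exact sum_le_sum_of_subset_of_nonneg (range_subset_range.mpr hkn)
    fun i _ _ => pow_nonneg hq i

lemma pqFactorial_succ (p q : ℝ) (n : ℕ) :
    pqFactorial p q (n + 1) = pqFactorial p q n * pqInt p q (n + 1) :=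
  prod_range_succ _ n

lemma pqFactorial_zero (p q : ℝ) : pqFactorial p q 0 = 1 := prod_range_zero _

lemma pqFactorial_one_pos {q : ℝ} (hq : 0 < q) (n : ℕ) : 0 < pqFactorial 1 q n :=
  prod_pos fun j _ => pqInt_one_pos hq j.succ_pos

lemma pqChoose_one_pos {q : ℝ} (hq : 0 < q) (n k : ℕ) : 0 < pqChoose 1 q n k :=
  div_pos (pqFactorial_one_pos hq n)
    (mul_pos (pqFactorial_one_pos hq k) (pqFactorial_one_pos hq _))

lemma pqChoose_one_zero {q : ℝ} (hq : 0 < q) (n : ℕ) : pqChoose 1 q n 0 = 1 := by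
  rw [pqChoose, Nat.sub_zero, pqFactorial_zero, one_mul, div_self (pqFactorial_one_pos hq n).ne']

lemma pqChoose_one_self {q : ℝ} (hq : 0 < q) (n : ℕ) : pqChoose 1 q n n = 1 := by
  rw [pqChoose, Nat.sub_self, pqFactorial_zero, mul_one, div_self (pqFactorial_one_pos hq n).ne']

lemma pqChoose_one_succ_succ {q : ℝ} (hq : 0 < q) {n k : ℕ} (hk : k < n) :
    pqChoose 1 q (n + 1) (k + 1) = pqChoose 1 q n (k + 1) + q ^ (n - k) * pqChoose 1 q n k := by
  obtain ⟨d, rfl⟩ : ∃ d, n = k + (d + 1) := ⟨n - k - 1, by omega⟩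
  have hsub₁ : k + (d + 1) + 1 - (k + 1) = d + 1 := by omega
  have hsub₂ : k + (d + 1) - (k + 1) = d := by omega
  simp only [pqChoose, hsub₁, hsub₂, Nat.add_sub_cancel_left, pqFactorial_succ]
  have hsplit :
      pqInt 1 q (k + (d + 1) + 1) = pqInt 1 q (d + 1) + q ^ (d + 1) * pqInt 1 q (k + 1) := by
    rw [show k + (d + 1) + 1 = d + 1 + (k + 1) by omega, pqInt_one_add]
  have := (pqFactorial_one_pos hq k).ne'
  have := (pqFactorial_one_pos hq d).ne'
  have := (pqInt_one_pos hq d.succ_pos).ne'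
  have := (pqInt_one_pos hq k.succ_pos).ne'
  rw [hsplit]
  field_simp

lemma pqBasis_one (q : ℝ) (n k : ℕ) (x : ℝ) :
    pqBasis 1 q n k x = pqChoose 1 q n k * x ^ k * ∏ s ∈ range (n - k), (1 - q ^ s * x) := by
  simp [pqBasis]

lemma pqBasis_one_self {q : ℝ} (hq : 0 < q) (n : ℕ) (x : ℝ) : pqBasis 1 q n n x = x ^ n := by
  simp [pqBasis_one, pqChoose_one_self hq]

lemma pqBasis_one_succ_zero {q : ℝ} (hq : 0 < q) (n : ℕ) (x : ℝ) :
    pqBasis 1 q (n + 1) 0 x = (1 - q ^ n * x) * pqBasis 1 q n 0 x := by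
  simp only [pqBasis_one, pqChoose_one_zero hq, Nat.sub_zero, prod_range_succ]
  ring

lemma pqBasis_one_succ_succ {q : ℝ} (hq : 0 < q) {n k : ℕ} (hk : k < n) (x : ℝ) :
    pqBasis 1 q (n + 1) (k + 1) x =
      (1 - q ^ (n - (k + 1)) * x) * pqBasis 1 q n (k + 1) x +
        q ^ (n - k) * x * pqBasis 1 q n k x := by
  obtain ⟨d, rfl⟩ : ∃ d, n = k + (d + 1) := ⟨n - k - 1, by omega⟩
  have hsub₁ : k + (d + 1) + 1 - (k + 1) = d + 1 := by omega
  have hsub₂ : k + (d + 1) - (k + 1) = d := by omega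
  simp only [pqBasis_one, pqChoose_one_succ_succ hq hk, hsub₁, hsub₂, Nat.add_sub_cancel_left,
    prod_range_succ]
  ring

lemma sum_pqBasis_one {q : ℝ} (hq : 0 < q) (n : ℕ) (x : ℝ) :
    ∑ k ∈ range (n + 1), pqBasis 1 q n k x = 1 := by
  induction n with
  | zero => simp [pqBasis_one_self hq]
  | succ n ih =>
    have hlast : pqBasis 1 q (n + 1) (n + 1) x = q ^ (n - n) * x * pqBasis 1 q n n x := by
      rw [pqBasis_one_self hq, pqBasis_one_self hq, Nat.sub_self, pow_zero, one_mul, pow_succ']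
    rw [sum_range_succ_succ_eq_of_pascal (c := fun k => (1 - q ^ (n - k) * x) * pqBasis 1 q n k x)
      (pqBasis_one_succ_zero hq n x) (fun k hk => pqBasis_one_succ_succ hq hk x) hlast]
    exact (sum_congr rfl fun k _ => by ring).trans ih

lemma pqBasis_one_succ_succ_mul_pqInt_one {q : ℝ} (hq : 0 < q) {n k : ℕ} (hk : k ≤ n) (x : ℝ) :
    pqBasis 1 q (n + 1) (k + 1) x * pqInt 1 q (k + 1) =
      pqInt 1 q (n + 1) * x * pqBasis 1 q n k x := by
  have hsub : n + 1 - (k + 1) = n - k := by omega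
  simp only [pqBasis_one, pqChoose, hsub, pqFactorial_succ]
  have := (pqFactorial_one_pos hq k).ne'
  have := (pqFactorial_one_pos hq (n - k)).ne'
  have := (pqInt_one_pos hq k.succ_pos).ne'
  field_simp
  ring_nf

lemma sum_pqBasis_one_mul_pqInt_one {q : ℝ} (hq : 0 < q) (n : ℕ) (x : ℝ) :
    ∑ k ∈ range (n + 1), pqBasis 1 q n k x * pqInt 1 q k = pqInt 1 q n * x := by
  cases n with
  | zero => simp [pqInt]
  | succ n =>
    rw [sum_range_succ', sum_congr rfl fun k hk =>
      pqBasis_one_succ_succ_mul_pqInt_one hq (Nat.le_of_lt_succ (mem_range.mp hk)) x,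
      ← mul_sum, sum_pqBasis_one hq, pqInt_zero, mul_zero, add_zero, mul_one]

lemma sum_pqBasis_one_mul_pow {q : ℝ} (hq : 0 < q) (n : ℕ) (x : ℝ) :
    ∑ k ∈ range (n + 1), pqBasis 1 q n k x * q ^ k = 1 - (1 - q ^ n) * x := by
  have hpow : ∀ k, pqBasis 1 q n k x * q ^ k =
      pqBasis 1 q n k x - (1 - q) * (pqBasis 1 q n k x * pqInt 1 q k) := fun k => by
    linear_combination pqBasis 1 q n k x * one_sub_mul_pqInt_one q k
  simp only [hpow, sum_sub_distrib, ← mul_sum, sum_pqBasis_one hq,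
    sum_pqBasis_one_mul_pqInt_one hq]
  linear_combination (-x) * one_sub_mul_pqInt_one q n

lemma sum_pqBasis_one_mul_pqInt_one_sq {q : ℝ} (hq : 0 < q) (n : ℕ) (x : ℝ) :
    ∑ k ∈ range (n + 1), pqBasis 1 q n k x * pqInt 1 q k ^ 2 =
      pqInt 1 q n ^ 2 * x ^ 2 + pqInt 1 q n * (x - x ^ 2) := by
  cases n with
  | zero => simp [pqInt]
  | succ n =>
    have hterm : ∀ k ∈ range (n + 1),
        pqBasis 1 q (n + 1) (k + 1) x * pqInt 1 q (k + 1) ^ 2 =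
          pqInt 1 q (n + 1) * x *
            (pqBasis 1 q n k x * pqInt 1 q k + pqBasis 1 q n k x * q ^ k) := by
      intro k hk
      linear_combination pqInt 1 q (k + 1) *
          pqBasis_one_succ_succ_mul_pqInt_one hq (Nat.le_of_lt_succ (mem_range.mp hk)) x +
        pqInt 1 q (n + 1) * x * pqBasis 1 q n k x * pqInt_one_succ q k
    rw [sum_range_succ', sum_congr rfl hterm, ← mul_sum, sum_add_distrib,
      sum_pqBasis_one_mul_pqInt_one hq, sum_pqBasis_one_mul_pow hq, pqInt_zero]
    linear_combination (-pqInt 1 q (n + 1) * x ^ 2) * pqInt_one_succ q n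

lemma pqNode_one (q : ℝ) (n k : ℕ) : pqNode 1 q n k = pqInt 1 q k / pqInt 1 q n := by
  simp [pqNode]

lemma sum_pqBasis_one_mul_pqNode_one_sub_sq {q : ℝ} (hq : 0 < q) {n : ℕ} (hn : 0 < n)
    (x : ℝ) :
    ∑ k ∈ range (n + 1), pqBasis 1 q n k x * (pqNode 1 q n k - x) ^ 2 =
      (pqInt 1 q n)⁻¹ * (x - x ^ 2) := by
  have hN := (pqInt_one_pos hq hn).ne'
  have hexpand : ∀ k, pqBasis 1 q n k x * (pqNode 1 q n k - x) ^ 2 =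
      pqBasis 1 q n k x * pqInt 1 q k ^ 2 / pqInt 1 q n ^ 2 -
        2 * x / pqInt 1 q n * (pqBasis 1 q n k x * pqInt 1 q k) + x ^ 2 * pqBasis 1 q n k x :=
    fun k => by rw [pqNode_one]; field_simp; ring
  simp only [hexpand, sum_add_distrib, sum_sub_distrib, ← sum_div, ← mul_sum,
    sum_pqBasis_one_mul_pqInt_one_sq hq, sum_pqBasis_one_mul_pqInt_one hq, sum_pqBasis_one hq]
  field_simp
  ring

lemma pqBasis_one_nonneg {q : ℝ} (hq : 0 < q) (hq₁ : q ≤ 1) (n k : ℕ) {x : ℝ}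
    (hx : x ∈ Set.Icc (0 : ℝ) 1) : 0 ≤ pqBasis 1 q n k x := by
  have hfactor : ∀ s, 0 ≤ 1 - q ^ s * x := fun s => by
    nlinarith [pow_le_one₀ hq.le hq₁ (n := s), pow_nonneg hq.le s, hx.1, hx.2]
  rw [pqBasis_one]
  have := pqChoose_one_pos hq n k
  have := hx.1
  have := prod_nonneg fun s (_ : s ∈ range (n - k)) => hfactor s
  positivity

lemma pqNode_one_mem_Icc {q : ℝ} (hq : 0 < q) {n k : ℕ} (hn : 0 < n) (hk : k ≤ n) :
    pqNode 1 q n k ∈ Set.Icc (0 : ℝ) 1 := by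
  have hN := pqInt_one_pos hq hn
  rw [pqNode_one]
  exact ⟨div_nonneg (pqInt_one_nonneg hq.le k) hN.le,
    (div_le_one hN).mpr (pqInt_one_mono hq.le hk)⟩

lemma pqInt_eq_pow_mul_pqInt_one {p : ℝ} (hp : 0 < p) (q : ℝ) (n : ℕ) :
    pqInt p q n = p ^ (n - 1) * pqInt 1 (q / p) n := by
  rw [pqInt_one_eq_sum_pow, mul_sum]
  refine sum_congr rfl fun i hi => ?_
  rw [div_pow, pow_sub₀ p hp.ne' (by have := mem_range.mp hi; omega)]
  field_simp

lemma pqFactorial_eq_pow_mul_pqFactorial_one {p : ℝ} (hp : 0 < p) (q : ℝ) (n : ℕ) :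
    pqFactorial p q n = p ^ n.choose 2 * pqFactorial 1 (q / p) n := by
  simp only [pqFactorial, pqInt_eq_pow_mul_pqInt_one hp, Nat.add_sub_cancel, prod_mul_distrib]
  rw [prod_pow_eq_pow_sum, sum_range_id_eq_choose_two]

lemma pqChoose_eq_pow_mul_pqChoose_one {p q : ℝ} (hp : 0 < p) (hq : 0 < q) {n k : ℕ}
    (hk : k ≤ n) :
    pqChoose p q n k = p ^ (k * (n - k)) * pqChoose 1 (q / p) n k := by
  obtain ⟨d, rfl⟩ := Nat.exists_eq_add_of_le hk
  have hq' : 0 < q / p := div_pos hq hp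
  have := (pqFactorial_one_pos hq' k).ne'
  have := (pqFactorial_one_pos hq' d).ne'
  have := hp.ne'
  simp only [pqChoose, Nat.add_sub_cancel_left, pqFactorial_eq_pow_mul_pqFactorial_one hp,
    Nat.add_choose_two, pow_add]
  field_simp

lemma pqBasis_eq_pqBasis_one {p q : ℝ} (hp : 0 < p) (hq : 0 < q) {n k : ℕ} (hk : k ≤ n)
    (x : ℝ) :
    pqBasis p q n k x = pqBasis 1 (q / p) n k x := by
  obtain ⟨d, rfl⟩ := Nat.exists_eq_add_of_le hk
  have hprod : ∏ s ∈ range d, (p ^ s - q ^ s * x) =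
      p ^ d.choose 2 * ∏ s ∈ range d, (1 - (q / p) ^ s * x) := by
    rw [← sum_range_id_eq_choose_two, ← prod_pow_eq_pow_sum, ← prod_mul_distrib]
    refine prod_congr rfl fun s _ => ?_
    rw [div_pow]
    field_simp
  have := hp.ne'
  rw [pqBasis_one, pqBasis, pqChoose_eq_pow_mul_pqChoose_one hp hq hk, Nat.add_sub_cancel_left,
    hprod, Nat.add_choose_two, pow_add, pow_add]
  field_simp
  ring_nf

lemma pqNode_eq_pqNode_one {p : ℝ} (hp : 0 < p) (q : ℝ) {n k : ℕ} (hk : k ≤ n) :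
    pqNode p q n k = pqNode 1 (q / p) n k := by
  rcases k.eq_zero_or_pos with rfl | hk₀
  · simp [pqNode, pqInt_zero]
  rw [pqNode, pqNode_one, pqInt_eq_pow_mul_pqInt_one hp, pqInt_eq_pow_mul_pqInt_one hp,
    ← mul_assoc, ← pow_add, show n - k + (k - 1) = n - 1 by omega,
    mul_div_mul_left _ _ (pow_ne_zero _ hp.ne')]

lemma pow_div_pqInt_eq_inv_pqInt_one {p : ℝ} (hp : 0 < p) (q : ℝ) (n : ℕ) :
    p ^ (n - 1) / pqInt p q n = (pqInt 1 (q / p) n)⁻¹ := by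
  rw [pqInt_eq_pow_mul_pqInt_one hp, div_mul_cancel_left₀ (pow_ne_zero _ hp.ne')]

section CompleteModulus

variable {f : ℝ → ℝ → ℝ}

lemma abs_sub_le_completeModulus
    (hf : ContinuousOn (fun z : ℝ × ℝ => f z.1 z.2) (Set.Icc (0 : ℝ) 1 ×ˢ Set.Icc (0 : ℝ) 1))
    {t s a b δ : ℝ} (ht : t ∈ Set.Icc (0 : ℝ) 1) (hs : s ∈ Set.Icc (0 : ℝ) 1)
    (ha : a ∈ Set.Icc (0 : ℝ) 1) (hb : b ∈ Set.Icc (0 : ℝ) 1) (hδ : 0 ≤ δ)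
    (hdist : (t - a) ^ 2 + (s - b) ^ 2 ≤ δ ^ 2) :
    |f t s - f a b| ≤ completeModulus f δ := by
  obtain ⟨C, hC⟩ := (isCompact_Icc.prod isCompact_Icc).exists_bound_of_continuousOn hf
  refine le_csSup ⟨2 * C, ?_⟩ ⟨t, ht, s, hs, a, ha, b, hb, ?_, rfl⟩
  · rintro _ ⟨t, ht, s, hs, a, ha, b, hb, -, rfl⟩
    have hts := hC (t, s) ⟨ht, hs⟩
    have hab := hC (a, b) ⟨ha, hb⟩
    rw [Real.norm_eq_abs] at hts hab
    linarith [abs_sub (f t s) (f a b)]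
  · exact (Real.sqrt_le_sqrt hdist).trans_eq (Real.sqrt_sq hδ)

lemma completeModulus_nonneg
    (hf : ContinuousOn (fun z : ℝ × ℝ => f z.1 z.2) (Set.Icc (0 : ℝ) 1 ×ˢ Set.Icc (0 : ℝ) 1))
    {δ : ℝ} (hδ : 0 ≤ δ) : 0 ≤ completeModulus f δ := by
  have h₀ : (0 : ℝ) ∈ Set.Icc (0 : ℝ) 1 := ⟨le_rfl, zero_le_one⟩
  simpa using abs_sub_le_completeModulus hf h₀ h₀ h₀ h₀ hδ (by simp [sq_nonneg])

lemma abs_sub_le_nat_mul_completeModulus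
    (hf : ContinuousOn (fun z : ℝ × ℝ => f z.1 z.2) (Set.Icc (0 : ℝ) 1 ×ˢ Set.Icc (0 : ℝ) 1))
    {δ : ℝ} (hδ : 0 ≤ δ) {N : ℕ} (hN : 0 < N) {a₁ a₂ b₁ b₂ : ℝ}
    (ha₁ : a₁ ∈ Set.Icc (0 : ℝ) 1) (ha₂ : a₂ ∈ Set.Icc (0 : ℝ) 1)
    (hb₁ : b₁ ∈ Set.Icc (0 : ℝ) 1) (hb₂ : b₂ ∈ Set.Icc (0 : ℝ) 1)
    (hdist : (a₁ - b₁) ^ 2 + (a₂ - b₂) ^ 2 ≤ (N * δ) ^ 2) :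
    |f a₁ a₂ - f b₁ b₂| ≤ N * completeModulus f δ := by
  have hN' : (0 : ℝ) < N := Nat.cast_pos.mpr hN
  let g₁ : ℕ → ℝ := fun i => b₁ + (i / N : ℝ) • (a₁ - b₁)
  let g₂ : ℕ → ℝ := fun i => b₂ + (i / N : ℝ) • (a₂ - b₂)
  have hmem : ∀ i ≤ N, g₁ i ∈ Set.Icc (0 : ℝ) 1 ∧ g₂ i ∈ Set.Icc (0 : ℝ) 1 := fun i hi => by
    have ht : (i / N : ℝ) ∈ Set.Icc (0 : ℝ) 1 :=
      ⟨by positivity, (div_le_one hN').mpr (by exact_mod_cast hi)⟩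
    exact ⟨(convex_Icc 0 1).add_smul_sub_mem hb₁ ha₁ ht,
      (convex_Icc 0 1).add_smul_sub_mem hb₂ ha₂ ht⟩
  have hstep : ∀ i ∈ range N,
      |f (g₁ (i + 1)) (g₂ (i + 1)) - f (g₁ i) (g₂ i)| ≤ completeModulus f δ := fun i hi => by
    have hi := mem_range.mp hi
    refine abs_sub_le_completeModulus hf (hmem _ hi).1 (hmem _ hi).2 (hmem i hi.le).1
      (hmem i hi.le).2 hδ ?_
    have hinc : (g₁ (i + 1) - g₁ i) ^ 2 + (g₂ (i + 1) - g₂ i) ^ 2 =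
        ((a₁ - b₁) ^ 2 + (a₂ - b₂) ^ 2) / N ^ 2 := by
      simp only [g₁, g₂, smul_eq_mul]
      push_cast
      field_simp
      ring
    rw [hinc, div_le_iff₀ (by positivity)]
    linarith
  calc |f a₁ a₂ - f b₁ b₂|
      = |∑ i ∈ range N, (f (g₁ (i + 1)) (g₂ (i + 1)) - f (g₁ i) (g₂ i))| := by
        rw [sum_range_sub (fun i => f (g₁ i) (g₂ i))]
        simp [g₁, g₂, hN'.ne']
    _ ≤ ∑ i ∈ range N, |f (g₁ (i + 1)) (g₂ (i + 1)) - f (g₁ i) (g₂ i)| := abs_sum_le_sum_abs _ _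
    _ ≤ N * completeModulus f δ := by simpa using sum_le_sum hstep

lemma abs_sub_le_one_add_div_mul_completeModulus
    (hf : ContinuousOn (fun z : ℝ × ℝ => f z.1 z.2) (Set.Icc (0 : ℝ) 1 ×ˢ Set.Icc (0 : ℝ) 1))
    {δ : ℝ} (hδ : 0 < δ) {a₁ a₂ b₁ b₂ : ℝ}
    (ha₁ : a₁ ∈ Set.Icc (0 : ℝ) 1) (ha₂ : a₂ ∈ Set.Icc (0 : ℝ) 1)
    (hb₁ : b₁ ∈ Set.Icc (0 : ℝ) 1) (hb₂ : b₂ ∈ Set.Icc (0 : ℝ) 1) :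
    |f a₁ a₂ - f b₁ b₂| ≤ (1 + ((a₁ - b₁) ^ 2 + (a₂ - b₂) ^ 2) / δ ^ 2) * completeModulus f δ := by
  set r := ((a₁ - b₁) ^ 2 + (a₂ - b₂) ^ 2) / δ ^ 2
  have hr : 0 ≤ r := by positivity
  set N := max 1 ⌈r⌉₊
  have hN : (1 : ℝ) ≤ N := by exact_mod_cast le_max_left 1 ⌈r⌉₊
  have hrN : r ≤ N := (Nat.le_ceil r).trans (by exact_mod_cast le_max_right 1 ⌈r⌉₊)
  have hNr : (N : ℝ) ≤ 1 + r := by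
    rw [Nat.cast_max, Nat.cast_one]
    exact max_le (by linarith) (by linarith [Nat.ceil_lt_add_one hr])
  have hdist : (a₁ - b₁) ^ 2 + (a₂ - b₂) ^ 2 ≤ (N * δ) ^ 2 := by
    have : (a₁ - b₁) ^ 2 + (a₂ - b₂) ^ 2 = r * δ ^ 2 := by
      simp only [r]
      field_simp
    rw [this, mul_pow]
    gcongr
    nlinarith
  calc |f a₁ a₂ - f b₁ b₂| ≤ N * completeModulus f δ :=
        abs_sub_le_nat_mul_completeModulus hf hδ.le (by omega) ha₁ ha₂ hb₁ hb₂ hdist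
    _ ≤ (1 + r) * completeModulus f δ := by gcongr; exact completeModulus_nonneg hf hδ.le

lemma abs_sum_mul_sub_le_two_mul_completeModulus
    (hf : ContinuousOn (fun z : ℝ × ℝ => f z.1 z.2) (Set.Icc (0 : ℝ) 1 ×ˢ Set.Icc (0 : ℝ) 1))
    {ι : Type*} {s : Finset ι} {w a b : ι → ℝ} {x y δ : ℝ}
    (hx : x ∈ Set.Icc (0 : ℝ) 1) (hy : y ∈ Set.Icc (0 : ℝ) 1) (hδ : 0 ≤ δ)
    (hw : ∀ i ∈ s, 0 ≤ w i) (hw₁ : ∑ i ∈ s, w i = 1)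
    (hab : ∀ i ∈ s, a i ∈ Set.Icc (0 : ℝ) 1 ∧ b i ∈ Set.Icc (0 : ℝ) 1)
    (hvar : ∑ i ∈ s, w i * ((a i - x) ^ 2 + (b i - y) ^ 2) ≤ δ ^ 2) :
    |∑ i ∈ s, w i * f (a i) (b i) - f x y| ≤ 2 * completeModulus f δ := by
  set D : ι → ℝ := fun i => (a i - x) ^ 2 + (b i - y) ^ 2
  have hterm : ∀ i ∈ s, w i * |f (a i) (b i) - f x y| ≤
      w i * ((1 + D i / δ ^ 2) * completeModulus f δ) := fun i hi => by
    obtain ⟨hai, hbi⟩ := hab i hi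
    rcases hδ.eq_or_lt with rfl | hδ
    · -- for `δ = 0` every node of positive weight is `(x, y)` itself
      have hwD : w i * D i = 0 :=
        le_antisymm ((single_le_sum (fun j hj => mul_nonneg (hw j hj) (by positivity)) hi).trans
          (hvar.trans_eq (zero_pow two_ne_zero))) (mul_nonneg (hw i hi) (by positivity))
      rcases mul_eq_zero.mp hwD with hwi | hDi
      · simp [hwi]
      · rw [zero_pow two_ne_zero, div_zero, add_zero, one_mul]
        exact mul_le_mul_of_nonneg_left (abs_sub_le_completeModulus hf hai hbi hx hy le_rfl
          (by simp only [D] at hDi; rw [hDi, zero_pow two_ne_zero])) (hw i hi)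
    · exact mul_le_mul_of_nonneg_left
        (abs_sub_le_one_add_div_mul_completeModulus hf hδ hai hbi hx hy) (hw i hi)
  calc |∑ i ∈ s, w i * f (a i) (b i) - f x y|
      = |∑ i ∈ s, w i * (f (a i) (b i) - f x y)| := by
        simp only [mul_sub, sum_sub_distrib, ← sum_mul, hw₁, one_mul]
    _ ≤ ∑ i ∈ s, w i * |f (a i) (b i) - f x y| := by
        refine (abs_sum_le_sum_abs _ _).trans_eq (sum_congr rfl fun i hi => ?_)
        rw [abs_mul, abs_of_nonneg (hw i hi)]
    _ ≤ ∑ i ∈ s, w i * ((1 + D i / δ ^ 2) * completeModulus f δ) := sum_le_sum hterm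
    _ = (1 + (∑ i ∈ s, w i * D i) / δ ^ 2) * completeModulus f δ := by
        simp only [← mul_assoc, ← sum_mul, mul_add, mul_one, sum_add_distrib, hw₁, sum_div,
          mul_div_assoc]
    _ ≤ 2 * completeModulus f δ := by
        have := div_le_one_of_le₀ hvar (sq_nonneg δ)
        have := completeModulus_nonneg hf hδ
        nlinarith

end CompleteModulus

lemma abs_sum_pqBasis_one_mul_pqBasis_one_sub_le {t₁ t₂ : ℝ} (ht₁ : 0 < t₁) (ht₁' : t₁ ≤ 1)
    (ht₂ : 0 < t₂) (ht₂' : t₂ ≤ 1) {n m : ℕ} (hn : 0 < n) (hm : 0 < m) {f : ℝ → ℝ → ℝ}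
    (hf : ContinuousOn (fun z : ℝ × ℝ => f z.1 z.2) (Set.Icc (0 : ℝ) 1 ×ˢ Set.Icc (0 : ℝ) 1))
    {x y : ℝ} (hx : x ∈ Set.Icc (0 : ℝ) 1) (hy : y ∈ Set.Icc (0 : ℝ) 1) :
    |∑ z ∈ range (n + 1) ×ˢ range (m + 1), pqBasis 1 t₁ n z.1 x * pqBasis 1 t₂ m z.2 y *
        f (pqNode 1 t₁ n z.1) (pqNode 1 t₂ m z.2) - f x y| ≤
      2 * completeModulus f
        (Real.sqrt ((pqInt 1 t₁ n)⁻¹ * (x - x ^ 2) + (pqInt 1 t₂ m)⁻¹ * (y - y ^ 2))) := by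
  have hweight : ∀ z ∈ range (n + 1) ×ˢ range (m + 1),
      0 ≤ pqBasis 1 t₁ n z.1 x * pqBasis 1 t₂ m z.2 y := fun z _ =>
    mul_nonneg (pqBasis_one_nonneg ht₁ ht₁' n z.1 hx) (pqBasis_one_nonneg ht₂ ht₂' m z.2 hy)
  have hvar : ∑ z ∈ range (n + 1) ×ˢ range (m + 1), pqBasis 1 t₁ n z.1 x * pqBasis 1 t₂ m z.2 y *
        ((pqNode 1 t₁ n z.1 - x) ^ 2 + (pqNode 1 t₂ m z.2 - y) ^ 2) =
      (pqInt 1 t₁ n)⁻¹ * (x - x ^ 2) + (pqInt 1 t₂ m)⁻¹ * (y - y ^ 2) := by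
    rw [sum_product_mul_mul_add _ _ (sum_pqBasis_one ht₁ n x) (sum_pqBasis_one ht₂ m y)
        (g := fun k => (pqNode 1 t₁ n k - x) ^ 2) (h := fun j => (pqNode 1 t₂ m j - y) ^ 2),
      sum_pqBasis_one_mul_pqNode_one_sub_sq ht₁ hn, sum_pqBasis_one_mul_pqNode_one_sub_sq ht₂ hm]
  have hvar₀ := hvar ▸ sum_nonneg fun z hz => mul_nonneg (hweight z hz) (by positivity)
  refine abs_sum_mul_sub_le_two_mul_completeModulus hf hx hy (Real.sqrt_nonneg _) hweight ?_
    (fun z hz => ?_) (by rw [hvar, Real.sq_sqrt hvar₀])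
  · simp only [sum_product]
    rw [← sum_mul_sum, sum_pqBasis_one ht₁, sum_pqBasis_one ht₂, one_mul]
  · obtain ⟨hk, hj⟩ := mem_product.mp hz
    exact ⟨pqNode_one_mem_Icc ht₁ hn (Nat.lt_succ_iff.mp (mem_range.mp hk)),
      pqNode_one_mem_Icc ht₂ hm (Nat.lt_succ_iff.mp (mem_range.mp hj))⟩

lemma pqBernstein2_eq_sum_product {p₁ q₁ p₂ q₂ : ℝ} (hp₁ : 0 < p₁) (hq₁ : 0 < q₁)
    (hp₂ : 0 < p₂) (hq₂ : 0 < q₂) (n m : ℕ) (f : ℝ → ℝ → ℝ) (x y : ℝ) :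
    pqBernstein2 p₁ q₁ p₂ q₂ n m f x y =
      ∑ z ∈ range (n + 1) ×ˢ range (m + 1),
        pqBasis 1 (q₁ / p₁) n z.1 x * pqBasis 1 (q₂ / p₂) m z.2 y *
          f (pqNode 1 (q₁ / p₁) n z.1) (pqNode 1 (q₂ / p₂) m z.2) := by
  rw [pqBernstein2, sum_product]
  refine sum_congr rfl fun k hk => sum_congr rfl fun j hj => ?_
  have hk : k ≤ n := Nat.lt_succ_iff.mp (mem_range.mp hk)
  have hj : j ≤ m := Nat.lt_succ_iff.mp (mem_range.mp hj)
  rw [pqBasis_eq_pqBasis_one hp₁ hq₁ hk, pqBasis_eq_pqBasis_one hp₂ hq₂ hj,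
    pqNode_eq_pqNode_one hp₁ q₁ hk, pqNode_eq_pqNode_one hp₂ q₂ hj]

theorem pqBernstein2_rate_complete_modulus_general (p₁ q₁ p₂ q₂ : ℝ) (n m : ℕ)
    (hq₁ : 0 < q₁) (hq₁p₁ : q₁ < p₁)
    (hq₂ : 0 < q₂) (hq₂p₂ : q₂ < p₂)
    (hn : 1 ≤ n) (hm : 1 ≤ m)
    (f : ℝ → ℝ → ℝ)
    (hf : ContinuousOn (fun z : ℝ × ℝ => f z.1 z.2)
      (Set.Icc (0 : ℝ) 1 ×ˢ Set.Icc (0 : ℝ) 1))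
    (x y : ℝ) (hx : x ∈ Set.Icc (0 : ℝ) 1) (hy : y ∈ Set.Icc (0 : ℝ) 1) :
    |pqBernstein2 p₁ q₁ p₂ q₂ n m f x y - f x y| ≤
      2 * completeModulus f
        (Real.sqrt ((p₁ ^ (n - 1) / pqInt p₁ q₁ n) * (x - x ^ 2) +
          (p₂ ^ (m - 1) / pqInt p₂ q₂ m) * (y - y ^ 2))) := by
  have hp₁ : 0 < p₁ := hq₁.trans hq₁p₁
  have hp₂ : 0 < p₂ := hq₂.trans hq₂p₂
  rw [pow_div_pqInt_eq_inv_pqInt_one hp₁, pow_div_pqInt_eq_inv_pqInt_one hp₂,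
    pqBernstein2_eq_sum_product hp₁ hq₁ hp₂ hq₂]
  exact abs_sum_pqBasis_one_mul_pqBasis_one_sub_le (div_pos hq₁ hp₁)
    ((div_le_one hp₁).mpr hq₁p₁.le) (div_pos hq₂ hp₂) ((div_le_one hp₂).mpr hq₂p₂.le) hn hm hf hx hy

theorem pqBernstein2_rate_complete_modulus (p₁ q₁ p₂ q₂ : ℝ) (n m : ℕ)
    (hq₁ : 0 < q₁) (hq₁p₁ : q₁ < p₁) (hp₁ : p₁ ≤ 1)
    (hq₂ : 0 < q₂) (hq₂p₂ : q₂ < p₂) (hp₂ : p₂ ≤ 1)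
    (hn : 1 ≤ n) (hm : 1 ≤ m)
    (f : ℝ → ℝ → ℝ)
    (hf : ContinuousOn (fun z : ℝ × ℝ => f z.1 z.2)
      (Set.Icc (0 : ℝ) 1 ×ˢ Set.Icc (0 : ℝ) 1))
    (x y : ℝ) (hx : x ∈ Set.Icc (0 : ℝ) 1) (hy : y ∈ Set.Icc (0 : ℝ) 1) :
    |pqBernstein2 p₁ q₁ p₂ q₂ n m f x y - f x y| ≤
      2 * completeModulus f
        (Real.sqrt ((p₁ ^ (n - 1) / pqInt p₁ q₁ n) * (x - x ^ 2) +
          (p₂ ^ (m - 1) / pqInt p₂ q₂ m) * (y - y ^ 2))) :=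
  pqBernstein2_rate_complete_modulus_general p₁ q₁ p₂ q₂ n m hq₁ hq₁p₁ hq₂ hq₂p₂ hn hm f hf x y hx
    hy
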